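/- Let K be a Lindblad generator on B(H') that is ρ-reversible (self-adjoint for ⟨X,Y⟩_ρ := tr(ρ^{1/2} X† ρ^{1/2} Y)) and generates a completely positive semigroup Ψ_t = e^{−tK}. Then for any matrix C, ⟨I_{2,2}(C), K(I_{2,2}(C))⟩_ρ + ⟨I_{2,2}(C†), K(I_{2,2}(C†))⟩_ρ ≤ ⟨C, K(C)⟩_ρ + ⟨C†, K(C†)⟩_ρ, where I_{2,2}(C) = ρ^{-1/4} |ρ^{1/4} C ρ^{1/4}| ρ^{-1/4}. -/

import Mathlib

open Matrix BigOperators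
open scoped ComplexOrder

noncomputable section

variable {n : Type*} [Fintype n] [DecidableEq n]

/-- Apply a real function to a matrix via its spectral decomposition
(defined to be `0` if the matrix is not Hermitian). -/
noncomputable def matFun (A : Matrix n n ℂ) (f : ℝ → ℝ) : Matrix n n ℂ :=
  if hA : A.IsHermitian then
    (hA.eigenvectorUnitary : Matrix n n ℂ) *
      Matrix.diagonal (fun i => (f (hA.eigenvalues i) : ℂ)) *
      star (hA.eigenvectorUnitary : Matrix n n ℂ)
  else 0

/-- Real power of a (Hermitian) matrix. -/
noncomputable def mpow (A : Matrix n n ℂ) (r : ℝ) : Matrix n n ℂ :=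
  matFun A (fun x => x ^ r)

/-- Logarithm of a (Hermitian) matrix. -/
noncomputable def mlog (A : Matrix n n ℂ) : Matrix n n ℂ :=
  matFun A Real.log

/-- Absolute value `|X| = √(X† X)` of a matrix. -/
noncomputable def mAbs (X : Matrix n n ℂ) : Matrix n n ℂ :=
  mpow (Xᴴ * X) (1/2 : ℝ)

/-- Schatten `p`-(quasi)norm `(tr |X|^p)^{1/p}`. -/
noncomputable def schatten (p : ℝ) (X : Matrix n n ℂ) : ℝ :=
  ((mpow (mAbs X) p).trace.re) ^ (1/p)

/-- `Γ_σ^{1/p}(X) = σ^{1/(2p)} X σ^{1/(2p)}`. -/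
noncomputable def gammaPow (σ : Matrix n n ℂ) (p : ℝ) (X : Matrix n n ℂ) :
    Matrix n n ℂ :=
  mpow σ (1/(2*p)) * X * mpow σ (1/(2*p))

/-- Weighted norm `‖X‖_{p,σ} = ‖Γ_σ^{1/p}(X)‖_p`. -/
noncomputable def wnorm (σ : Matrix n n ℂ) (p : ℝ) (X : Matrix n n ℂ) : ℝ :=
  schatten p (gammaPow σ p X)

/-- The power operator `I_{q,p}(X) = Γ_σ^{-1/q}(|Γ_σ^{1/p}(X)|^{p/q})`. -/
noncomputable def powOp (σ : Matrix n n ℂ) (q p : ℝ) (X : Matrix n n ℂ) :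
    Matrix n n ℂ :=
  mpow σ (-(1/(2*q))) * mpow (mAbs (gammaPow σ p X)) (p/q) * mpow σ (-(1/(2*q)))

/-- Umegaki relative entropy `D(ρ‖σ) = tr(ρ log ρ) - tr(ρ log σ)`. -/
noncomputable def relEnt (ρ σ : Matrix n n ℂ) : ℝ :=
  ((ρ * mlog ρ).trace - (ρ * mlog σ).trace).re

/-- The entropy function `Ent_{p,σ}(X)`. -/
noncomputable def Ent (σ : Matrix n n ℂ) (p : ℝ) (X : Matrix n n ℂ) : ℝ :=
  ((mpow (gammaPow σ p X) p * mlog (mpow (gammaPow σ p X) p)).trace).re -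
    ((mpow (gammaPow σ p X) p * mlog σ).trace).re -
    (wnorm σ p X) ^ p * Real.log ((wnorm σ p X) ^ p)

end
/-- Exponential of a superoperator, computed via its matrix representation in the
standard basis of the matrix space. -/
noncomputable def superExp {n : Type*} [Fintype n] [DecidableEq n]
    (K : Matrix n n ℂ →ₗ[ℂ] Matrix n n ℂ) : Matrix n n ℂ →ₗ[ℂ] Matrix n n ℂ :=
  Matrix.toLin (Matrix.stdBasis ℂ n n) (Matrix.stdBasis ℂ n n)
    (NormedSpace.exp
      (LinearMap.toMatrix (Matrix.stdBasis ℂ n n) (Matrix.stdBasis ℂ n n) K))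

/-- The Choi matrix of a superoperator. -/
noncomputable def choi {n : Type*} [Fintype n] [DecidableEq n]
    (Φ : Matrix n n ℂ →ₗ[ℂ] Matrix n n ℂ) : Matrix (n × n) (n × n) ℂ :=
  Matrix.of fun p q => Φ (Matrix.single p.1 q.1 1) p.2 q.2

/-- KMS inner product `⟨X,Y⟩_ρ = tr(ρ^{1/2} X† ρ^{1/2} Y)`. -/
noncomputable def kms {n : Type*} [Fintype n] [DecidableEq n]
    (ρ : Matrix n n ℂ) (X Y : Matrix n n ℂ) : ℂ :=
  (mpow ρ (1/2) * Xᴴ * mpow ρ (1/2) * Y).trace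

/-- The operator `I_{2,2}(C) = ρ^{-1/4} |ρ^{1/4} C ρ^{1/4}| ρ^{-1/4}`. -/
noncomputable def I22 {n : Type*} [Fintype n] [DecidableEq n]
    (ρ : Matrix n n ℂ) (C : Matrix n n ℂ) : Matrix n n ℂ :=
  mpow ρ (-(1/4)) * mAbs (mpow ρ (1/4) * C * mpow ρ (1/4)) * mpow ρ (-(1/4))

/-!
Conjugation by `ρ^{1/4}` turns the KMS form into the Hilbert–Schmidt form, `I_{2,2}(C)` and
`I_{2,2}(C†)` into `|M|` and `|M†|` for `M = ρ^{1/4} C ρ^{1/4}`, and `e^{-tK}` into a completely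
positive map `Φ_t`. The block matrices `[[|M†|, ±M], [±M†, |M|]]` are positive, because
`[[|M†|, M], [M†, |M|]] = |N| + N` for the hermitian `N = [[0, M], [M†, 0]]`. Hence the trace of
the `+` block against `Φ_t` applied blockwise to the `-` block is a nonnegative function of
`t ≥ 0` that vanishes at `t = 0`, so its derivative at `0` is nonnegative; that derivative is the
difference of the two sides of the inequality.
-/

section

open Matrix
open scoped MatrixOrder

section StarCongr

variable {R A : Type*} [CommSemiring R] [Ring A] [StarRing A] [Algebra R A]

def starCongr (u : Aˣ) : A ≃ₗ[R] A :=
  LinearEquiv.ofLinearMap (LinearMap.mulLeftRight R ((u : A), star (u : A)))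
    (LinearMap.mulLeftRight R ((↑u⁻¹ : A), star (↑u⁻¹ : A)))
    (by ext x; simp [mul_assoc, ← star_mul])
    (by ext x; simp [mul_assoc, ← star_mul])

theorem starCongr_apply (u : Aˣ) (x : A) : starCongr (R := R) u x = u * x * star (u : A) := rfl

theorem starCongr_symm_apply (u : Aˣ) (x : A) :
    (starCongr (R := R) u).symm x = ↑u⁻¹ * x * star (↑u⁻¹ : A) := rfl

theorem starCongr_star (u : Aˣ) (x : A) :
    starCongr (R := R) u (star x) = star (starCongr (R := R) u x) := by
  simp [starCongr_apply, mul_assoc]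

theorem starCongr_conj_apply_of_kraus {ι : Type*} [Fintype ι] (u : Aˣ) {V : ι → A}
    {Φ : Module.End R A} (hΦ : ∀ x, Φ x = ∑ k, V k * x * star (V k)) (x : A) :
    (starCongr u).conj Φ x = ∑ k, (u * V k * ↑u⁻¹) * x * star (u * V k * ↑u⁻¹ : A) := by
  simp [LinearEquiv.conj_apply_apply, starCongr_apply, starCongr_symm_apply, hΦ, mul_assoc]

end StarCongr

section BlockMatrices

variable {𝕜 : Type*} [RCLike 𝕜] {m n : Type*} [Fintype m] [Fintype n]

theorem Matrix.trace_fromBlocks {α : Type*} [AddCommMonoid α] (A : Matrix m m α)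
    (B : Matrix m n α) (C : Matrix n m α) (D : Matrix n n α) :
    (fromBlocks A B C D).trace = A.trace + D.trace := by
  simp [Matrix.trace, Fintype.sum_sum_type]

variable [DecidableEq m] [DecidableEq n]

theorem Matrix.PosSemidef.fromBlocks_diag {A : Matrix m m 𝕜} {D : Matrix n n 𝕜}
    (hA : A.PosSemidef) (hD : D.PosSemidef) : (fromBlocks A 0 0 D).PosSemidef := by
  obtain ⟨a, rfl⟩ := CStarAlgebra.nonneg_iff_eq_star_mul_self.mp hA.nonneg
  obtain ⟨d, rfl⟩ := CStarAlgebra.nonneg_iff_eq_star_mul_self.mp hD.nonneg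
  simpa [fromBlocks_conjTranspose, fromBlocks_multiply, star_eq_conjTranspose] using
    posSemidef_conjTranspose_mul_self (fromBlocks a 0 0 d)

theorem Matrix.posSemidef_fromBlocks_sqrt (M : Matrix m n 𝕜) :
    (fromBlocks (CFC.sqrt (M * Mᴴ)) M Mᴴ (CFC.sqrt (Mᴴ * M))).PosSemidef := by
  set N : Matrix (m ⊕ n) (m ⊕ n) 𝕜 := fromBlocks 0 M Mᴴ 0
  have hN : IsSelfAdjoint N := by
    simp [N, IsSelfAdjoint, star_eq_conjTranspose, fromBlocks_conjTranspose]
  have habs : CFC.abs N = fromBlocks (CFC.sqrt (M * Mᴴ)) 0 0 (CFC.sqrt (Mᴴ * M)) := by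
    refine CFC.sqrt_unique ?_ ((CFC.sqrt_nonneg _).posSemidef.fromBlocks_diag
      (CFC.sqrt_nonneg _).posSemidef).nonneg
    rw [fromBlocks_multiply, CFC.sqrt_mul_sqrt_self _ (posSemidef_self_mul_conjTranspose M).nonneg,
      CFC.sqrt_mul_sqrt_self _ (posSemidef_conjTranspose_mul_self M).nonneg]
    simp [N, star_eq_conjTranspose, fromBlocks_conjTranspose, fromBlocks_multiply]
  have hblock : fromBlocks (CFC.sqrt (M * Mᴴ)) M Mᴴ (CFC.sqrt (Mᴴ * M)) = CFC.abs N + N := by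
    rw [habs]
    simp [N, fromBlocks_add]
  rw [hblock, CFC.abs_add_self N hN]
  exact (smul_nonneg zero_le_two (CFC.posPart_nonneg N)).posSemidef

theorem Matrix.PosSemidef.trace_mul_nonneg {P Q : Matrix n n 𝕜} (hP : P.PosSemidef)
    (hQ : Q.PosSemidef) : 0 ≤ (P * Q).trace := by
  obtain ⟨y, rfl⟩ := CStarAlgebra.nonneg_iff_eq_star_mul_self.mp hQ.nonneg
  rw [← Matrix.mul_assoc, trace_mul_cycle, star_eq_conjTranspose]
  exact (hP.mul_mul_conjTranspose_same y).trace_nonneg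

omit [DecidableEq m] [DecidableEq n] in
theorem Matrix.PosSemidef.fromBlocks_map_of_kraus {ι : Type*} [Fintype ι]
    {V : ι → Matrix n m 𝕜} {Φ : Matrix m m 𝕜 → Matrix n n 𝕜}
    (hΦ : ∀ X, Φ X = ∑ k, V k * X * (V k)ᴴ) {A B C D : Matrix m m 𝕜}
    (h : (fromBlocks A B C D).PosSemidef) :
    (fromBlocks (Φ A) (Φ B) (Φ C) (Φ D)).PosSemidef := by
  have hsum : fromBlocks (Φ A) (Φ B) (Φ C) (Φ D) =
      ∑ k, fromBlocks (V k) 0 0 (V k) * fromBlocks A B C D * (fromBlocks (V k) 0 0 (V k))ᴴ := by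
    ext (i | i) (j | j) <;>
      simp [hΦ, fromBlocks_conjTranspose, fromBlocks_multiply, Matrix.sum_apply]
  rw [hsum]
  exact posSemidef_sum _ fun k _ => h.mul_mul_conjTranspose_same _

end BlockMatrices

variable {n : Type*} [Fintype n] [DecidableEq n]

theorem exists_kraus_of_posSemidef_choi {Φ : Matrix n n ℂ →ₗ[ℂ] Matrix n n ℂ}
    (hΦ : (choi Φ).PosSemidef) :
    ∃ V : n × n → Matrix n n ℂ, ∀ X, Φ X = ∑ k, V k * X * (V k)ᴴ := by
  obtain ⟨L, hL⟩ := CStarAlgebra.nonneg_iff_eq_star_mul_self.mp hΦ.nonneg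
  refine ⟨fun k => of fun a i => star (L k (i, a)), fun X => ?_⟩
  suffices Φ = ∑ k, LinearMap.mulLeftRight ℂ
      ((of fun a i => star (L k (i, a)) : Matrix n n ℂ), (of fun a i => star (L k (i, a)))ᴴ) by
    simp [this, LinearMap.mulLeftRight_apply]
  apply ext_linearMap
  intro i j
  refine LinearMap.ext_ring ?_
  ext a b
  have h := congr_fun₂ hL (i, a) (j, b)
  simp only [choi, of_apply, star_eq_conjTranspose, mul_apply, conjTranspose_apply] at h
  simp only [LinearMap.coe_comp, Function.comp_apply, singleLinearMap_apply, h,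
    LinearMap.sum_apply, LinearMap.mulLeftRight_apply, Matrix.sum_apply]
  refine Finset.sum_congr rfl fun k _ => ?_
  simp [mul_apply, single_apply, ite_and]

noncomputable def absGap (M : Matrix n n ℂ) : Module.End ℂ (Matrix n n ℂ) →ₗ[ℂ] ℂ where
  toFun Φ := (CFC.abs Mᴴ * Φ (CFC.abs Mᴴ)).trace + (CFC.abs M * Φ (CFC.abs M)).trace
    - (Mᴴ * Φ M).trace - (M * Φ Mᴴ).trace
  map_add' Φ Ψ := by
    simp only [LinearMap.add_apply, Matrix.mul_add, trace_add]
    ring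
  map_smul' c Φ := by
    simp only [LinearMap.smul_apply, Matrix.mul_smul, trace_smul, smul_eq_mul, RingHom.id_apply]
    ring

theorem absGap_id (M : Matrix n n ℂ) : absGap M LinearMap.id = 0 := by
  simp only [absGap, LinearMap.coe_mk, AddHom.coe_mk, LinearMap.id_apply, CFC.abs_mul_abs,
    star_eq_conjTranspose, conjTranspose_conjTranspose]
  ring

theorem absGap_nonneg_of_kraus {ι : Type*} [Fintype ι] (M : Matrix n n ℂ)
    {V : ι → Matrix n n ℂ} {Φ : Module.End ℂ (Matrix n n ℂ)}
    (hΦ : ∀ X, Φ X = ∑ k, V k * X * (V k)ᴴ) : 0 ≤ absGap M Φ := by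
  have hP := posSemidef_fromBlocks_sqrt M
  have hQ := (posSemidef_fromBlocks_sqrt (-M)).fromBlocks_map_of_kraus hΦ
  convert hP.trace_mul_nonneg hQ using 1
  simp only [absGap, LinearMap.coe_mk, AddHom.coe_mk, CFC.abs, fromBlocks_multiply,
    trace_fromBlocks, star_eq_conjTranspose, conjTranspose_conjTranspose, conjTranspose_neg,
    neg_mul, mul_neg, neg_neg, map_neg, trace_add, trace_neg]
  ring

theorem superExp_zero : superExp (0 : Module.End ℂ (Matrix n n ℂ)) = LinearMap.id := by
  simp [superExp]

section Derivative

-- `NormedSpace.exp` depends only on the topology, so any submultiplicative norm will do.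
attribute [local instance] Matrix.linftyOpNormedRing Matrix.linftyOpNormedAlgebra

theorem hasDerivAt_re_superExp_smul (F : Module.End ℂ (Matrix n n ℂ) →ₗ[ℂ] ℂ)
    (K : Module.End ℂ (Matrix n n ℂ)) :
    HasDerivAt (fun t : ℝ => (F (superExp (t • K))).re) (F K).re 0 := by
  set b := Matrix.stdBasis ℂ n n
  let G : Matrix (n × n) (n × n) ℂ →L[ℝ] ℝ := LinearMap.toContinuousLinearMap
    (Complex.reLm ∘ₗ (F ∘ₗ (toLin b b).toLinearMap).restrictScalars ℝ)
  have hexp := hasDerivAt_exp_smul_const (𝕂 := ℝ) (LinearMap.toMatrix b b K) 0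
  simp only [zero_smul, NormedSpace.exp_zero, one_mul] at hexp
  have hK : (F K).re = G (LinearMap.toMatrix b b K) := by
    simp [G, toLin_toMatrix]
  rw [hK]
  exact G.hasFDerivAt.comp_hasDerivAt (0 : ℝ) hexp

end Derivative

theorem re_apply_nonpos_of_superExp (F : Module.End ℂ (Matrix n n ℂ) →ₗ[ℂ] ℂ)
    (K : Module.End ℂ (Matrix n n ℂ)) (h0 : F LinearMap.id = 0)
    (hF : ∀ t : ℝ, 0 ≤ t → 0 ≤ (F (superExp ((-t) • K))).re) : (F K).re ≤ 0 := by
  let g (t : ℝ) : ℝ := (F (superExp ((-t) • K))).re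
  have hg : HasDerivAt g (-(F K).re) 0 := by
    simpa [Function.comp_def] using
      (hasDerivAt_re_superExp_smul F K).comp_of_eq (0 : ℝ) (hasDerivAt_neg 0) neg_zero.symm
  have hmin : IsLocalMinOn g (Set.Ici 0) 0 := by
    refine IsMinOn.localize fun t ht => ?_
    simpa [g, superExp_zero, h0] using hF t ht
  have hcone : (1 : ℝ) ∈ posTangentConeAt (Set.Ici 0) (0 : ℝ) :=
    mem_posTangentConeAt_of_segment_subset (by simp [segment_eq_Icc, Set.Icc_subset_Ici_self])
  simpa using hmin.hasFDerivWithinAt_nonneg hg.hasFDerivAt.hasFDerivWithinAt hcone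

theorem matFun_eq_cfc (A : Matrix n n ℂ) (f : ℝ → ℝ) : matFun A f = cfc f A := by
  by_cases hA : A.IsHermitian
  · rw [matFun, dif_pos hA, hA.cfc_eq, Matrix.IsHermitian.cfc, Unitary.conjStarAlgAut_apply]
    rfl
  · exact (dif_neg hA).trans (cfc_apply_of_not_predicate A hA).symm

theorem mpow_eq_rpow {A : Matrix n n ℂ} (hA : A.PosSemidef) (r : ℝ) : mpow A r = A ^ r := by
  rw [mpow, matFun_eq_cfc, CFC.rpow_eq_cfc_real hA.nonneg]

theorem mAbs_eq_abs (M : Matrix n n ℂ) : mAbs M = CFC.abs M := by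
  rw [mAbs, mpow_eq_rpow (posSemidef_conjTranspose_mul_self M), CFC.abs, CFC.sqrt_eq_rpow]
  rfl

theorem Matrix.star_rpow (ρ : Matrix n n ℂ) (r : ℝ) : star (ρ ^ r) = ρ ^ r :=
  (IsSelfAdjoint.of_nonneg (CFC.rpow_nonneg (a := ρ) (y := r))).star_eq

namespace Matrix.PosDef

variable {ρ : Matrix n n ℂ} (hρ : ρ.PosDef)

noncomputable def rpowUnit (r : ℝ) : (Matrix n n ℂ)ˣ :=
  ⟨ρ ^ r, ρ ^ (-r), CFC.rpow_mul_rpow_neg r hρ.isStrictlyPositive,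
    CFC.rpow_neg_mul_rpow r hρ.isStrictlyPositive⟩

theorem kms_eq_trace_starCongr (X Y : Matrix n n ℂ) :
    kms ρ X Y = ((starCongr (R := ℂ) (hρ.rpowUnit (1 / 4)) X)ᴴ *
      starCongr (R := ℂ) (hρ.rpowUnit (1 / 4)) Y).trace := by
  have hsq : ρ ^ (1 / 4 : ℝ) * ρ ^ (1 / 4 : ℝ) = ρ ^ (1 / 2 : ℝ) := by
    rw [← CFC.rpow_add hρ.isUnit]; norm_num
  simp only [kms, starCongr_apply, rpowUnit, mpow_eq_rpow hρ.posSemidef, ← star_eq_conjTranspose,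
    star_mul, star_rpow, ← hsq, mul_assoc]
  rw [trace_mul_comm]
  simp only [mul_assoc]

theorem starCongr_I22 (C : Matrix n n ℂ) :
    starCongr (R := ℂ) (hρ.rpowUnit (1 / 4)) (I22 ρ C) =
      CFC.abs (starCongr (R := ℂ) (hρ.rpowUnit (1 / 4)) C) := by
  rw [← LinearEquiv.eq_symm_apply, starCongr_symm_apply]
  simp only [I22, mAbs_eq_abs, mpow_eq_rpow hρ.posSemidef, rpowUnit, starCongr_apply, star_rpow,
    Units.inv_mk, Units.val_mk]

theorem absGap_starCongr_conj (K : Module.End ℂ (Matrix n n ℂ)) (C : Matrix n n ℂ) :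
    absGap (starCongr (R := ℂ) (hρ.rpowUnit (1 / 4)) C)
        ((starCongr (R := ℂ) (hρ.rpowUnit (1 / 4))).conj K) =
      (kms ρ (I22 ρ C) (K (I22 ρ C)) + kms ρ (I22 ρ (Cᴴ)) (K (I22 ρ (Cᴴ)))) -
        (kms ρ C (K C) + kms ρ (Cᴴ) (K (Cᴴ))) := by
  set e := starCongr (R := ℂ) (hρ.rpowUnit (1 / 4))
  have hkms : ∀ X, kms ρ X (K X) = ((e X)ᴴ * e.conj K (e X)).trace := fun X => by
    rw [hρ.kms_eq_trace_starCongr, LinearEquiv.conj_apply_apply, LinearEquiv.symm_apply_apply]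
  have hstar : e Cᴴ = (e C)ᴴ := by
    simpa only [star_eq_conjTranspose] using starCongr_star _ C
  have hI22 : ∀ X, e (I22 ρ X) = CFC.abs (e X) := hρ.starCongr_I22
  have habs : ∀ X : Matrix n n ℂ, (CFC.abs X)ᴴ = CFC.abs X := fun X =>
    (CFC.abs_nonneg X).isSelfAdjoint.star_eq
  simp only [hkms, hI22, hstar, habs, absGap, LinearMap.coe_mk, AddHom.coe_mk,
    conjTranspose_conjTranspose]
  ring

end Matrix.PosDef

end

theorem dirichlet_abs_comparison_general {n : Type*} [Fintype n] [DecidableEq n]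
    (ρ : Matrix n n ℂ) (hρ : ρ.PosDef)
    (K : Matrix n n ℂ →ₗ[ℂ] Matrix n n ℂ)
    (hCP : ∀ t : ℝ, 0 ≤ t → (choi (superExp ((-t) • K))).PosSemidef)
    (C : Matrix n n ℂ) :
    (kms ρ (I22 ρ C) (K (I22 ρ C)) + kms ρ (I22 ρ (Cᴴ)) (K (I22 ρ (Cᴴ)))).re ≤
    (kms ρ C (K C) + kms ρ (Cᴴ) (K (Cᴴ))).re := by
  set e := starCongr (R := ℂ) (hρ.rpowUnit (1 / 4))
  have hgap := hρ.absGap_starCongr_conj K C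
  have hsemigroup : ∀ t : ℝ, 0 ≤ t → 0 ≤ (absGap (e C) (e.conj (superExp ((-t) • K)))).re := by
    intro t ht
    obtain ⟨V, hV⟩ := exists_kraus_of_posSemidef_choi (hCP t ht)
    simp only [← star_eq_conjTranspose] at hV
    exact (Complex.nonneg_iff.mp (absGap_nonneg_of_kraus (e C)
      (by simpa only [star_eq_conjTranspose] using starCongr_conj_apply_of_kraus _ hV))).1
  have h := re_apply_nonpos_of_superExp (absGap (e C) ∘ₗ e.conj.toLinearMap) K
    (by simp [absGap_id]) hsemigroup
  rw [LinearMap.comp_apply, LinearEquiv.coe_coe, hgap, Complex.sub_re] at h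
  linarith

/-- For a ρ-reversible Lindblad generator `K` generating a completely positive
semigroup `e^{-tK}`, `⟨I_{2,2}(C), K(I_{2,2}(C))⟩_ρ + ⟨I_{2,2}(C†), K(I_{2,2}(C†))⟩_ρ
≤ ⟨C, K(C)⟩_ρ + ⟨C†, K(C†)⟩_ρ`. -/
theorem dirichlet_abs_comparison {n : Type*} [Fintype n] [DecidableEq n]
    (ρ : Matrix n n ℂ) (hρ : ρ.PosDef) (hρ1 : ρ.trace = 1)
    (K : Matrix n n ℂ →ₗ[ℂ] Matrix n n ℂ)
    (hherm : ∀ X, K (Xᴴ) = (K X)ᴴ)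
    (hsa : ∀ X Y, kms ρ X (K Y) = kms ρ (K X) Y)
    (hK1 : K 1 = 0)
    (hCP : ∀ t : ℝ, 0 ≤ t → (choi (superExp ((-t) • K))).PosSemidef)
    (C : Matrix n n ℂ) :
    (kms ρ (I22 ρ C) (K (I22 ρ C)) + kms ρ (I22 ρ (Cᴴ)) (K (I22 ρ (Cᴴ)))).re ≤
    (kms ρ C (K C) + kms ρ (Cᴴ) (K (Cᴴ))).re :=
  dirichlet_abs_comparison_general ρ hρ K hCP C
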